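/- Single-letterization of the delivery-stage rate (converse step for R_RA). Let ℳ_AR, ℳ_BR, ℳ_RA be finite sets, φ_AR : 𝒳^n → ℳ_AR, φ_BR : 𝒴^n → ℳ_BR, φ_RA : 𝒵^n×ℳ_AR×ℳ_BR → ℳ_RA arbitrary functions, and set M_AR = φ_AR(X^n), M_BR = φ_BR(Y^n), M_RA = φ_RA(Z^n,M_AR,M_BR). Then Σ_{i=1}^n I(Y_i; M_RA | X_i, M_AR, X^{i−1}, Y_{i+1}^n) ≤ H(M_RA | M_AR, X^n) ≤ log₂|ℳ_RA|. In particular, if |ℳ_RA| ≤ 2^{nR_RA}, then Σ_{i=1}^n I(Y_i; V_{2,i} | X_i, U_{1,i}) ≤ nR_RA, where U_{1,i} = (M_AR, X^{i−1}, Y_{i+1}^n) and V_{2,i} = M_RA. -/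

import Mathlib

/-!
Given `(X_i, X^{i-1}, Y_{i+1}^n)`, the letter `Y_i` is independent of `X_{i+1}^n`: the letters are
i.i.d. and the two depend on disjoint blocks of them. As `M_AR` is a function of `Xⁿ`, adjoining
`X_{i+1}^n` to `M_RA` gives `I(Y_i; M_RA | X_i, U_{1,i}) ≤ I(Y_i; M_RA | Xⁿ, Y_{i+1}^n)`. By the
chain rule these terms telescope to `I(Yⁿ; M_RA | Xⁿ) ≤ H(M_RA | M_AR, Xⁿ)`, and an entropy is at
most the logarithm of the alphabet size.
-/

open scoped BigOperators

noncomputable section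

namespace IRSC

attribute [local instance] Classical.propDecidable

/-- A bundled finite alphabet. -/
structure FinAlph where
  carrier : Type
  [fin : Fintype carrier]

attribute [instance] FinAlph.fin

section Basic

variable {Ω α β γ : Type*} [Fintype Ω]

/-- `μ` is a probability mass function on the finite type `Ω`. -/
def IsPMF (μ : Ω → ℝ) : Prop := (∀ ω, 0 ≤ μ ω) ∧ ∑ ω, μ ω = 1

/-- The probability that the random variable `f` takes the value `a` under `μ`. -/
def probOf (μ : Ω → ℝ) (f : Ω → α) (a : α) : ℝ := ∑ ω, if f ω = a then μ ω else 0

/-- The expectation of the real-valued random variable `g` under `μ`. -/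
def expect (μ : Ω → ℝ) (g : Ω → ℝ) : ℝ := ∑ ω, μ ω * g ω

/-- The Shannon entropy (base 2) `H(f)` of a random variable `f` under `μ`. -/
def entropy [Fintype α] (μ : Ω → ℝ) (f : Ω → α) : ℝ :=
  -∑ a, probOf μ f a * Real.logb 2 (probOf μ f a)

/-- The conditional entropy `H(f | g)` under `μ`. -/
def condEntropy [Fintype α] [Fintype β] (μ : Ω → ℝ) (f : Ω → α) (g : Ω → β) : ℝ :=
  entropy μ (fun ω => (f ω, g ω)) - entropy μ g

/-- The conditional mutual information `I(f ; g | h)` under `μ`. -/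
def condMI [Fintype α] [Fintype β] [Fintype γ]
    (μ : Ω → ℝ) (f : Ω → α) (g : Ω → β) (h : Ω → γ) : ℝ :=
  condEntropy μ f h + condEntropy μ g h - condEntropy μ (fun ω => (f ω, g ω)) h

/-- `MarkovChain μ f g h` says that `f − g − h` forms a Markov chain under `μ`, i.e.
`f` and `h` are conditionally independent given `g`. -/
def MarkovChain (μ : Ω → ℝ) (f : Ω → α) (g : Ω → β) (h : Ω → γ) : Prop :=
  ∀ a b c,
    probOf μ (fun ω => (f ω, g ω, h ω)) (a, b, c) * probOf μ g b =
      probOf μ (fun ω => (f ω, g ω)) (a, b) * probOf μ (fun ω => (g ω, h ω)) (b, c)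

end Basic

/-- The i.i.d. distribution of `n` copies of `p`. -/
def iid {W : Type*} [Fintype W] (p : W → ℝ) (n : ℕ) : (Fin n → W) → ℝ :=
  fun w => ∏ i, p (w i)

/-- The past `(x_1, …, x_{i-1})` of a sequence `x` relative to position `i`. -/
def past {n : ℕ} {α : Type*} (i : Fin n) (x : Fin n → α) : {j : Fin n // j < i} → α :=
  fun j => x j.1

/-- The future `(x_{i+1}, …, x_n)` of a sequence `x` relative to position `i`. -/
def fut {n : ℕ} {α : Type*} (i : Fin n) (x : Fin n → α) : {j : Fin n // i < j} → α :=
  fun j => x j.1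

section General

variable {Ω α β γ δ : Type*} [Fintype Ω] {μ : Ω → ℝ}

lemma IsPMF.nonempty (hμ : IsPMF μ) : Nonempty Ω := by
  by_contra hΩ
  rw [not_nonempty_iff] at hΩ
  simpa using hμ.2

lemma probOf_nonneg (h0 : ∀ ω, 0 ≤ μ ω) (f : Ω → α) (a : α) : 0 ≤ probOf μ f a :=
  Finset.sum_nonneg fun ω _ => ite_nonneg (h0 ω) le_rfl

lemma probOf_congr {f : Ω → α} {g : Ω → β} {a : α} {b : β}
    (h : ∀ ω, f ω = a ↔ g ω = b) : probOf μ f a = probOf μ g b :=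
  Finset.sum_congr rfl fun ω _ => by simp only [h ω]

lemma probOf_mono (h0 : ∀ ω, 0 ≤ μ ω) {f : Ω → α} {g : Ω → β} {a : α} {b : β}
    (h : ∀ ω, f ω = a → g ω = b) : probOf μ f a ≤ probOf μ g b :=
  Finset.sum_le_sum fun ω _ => by
    by_cases hf : f ω = a
    · simp [hf, h ω hf]
    · simpa [hf] using ite_nonneg (h0 ω) le_rfl

lemma probOf_self_pos (h0 : ∀ ω, 0 ≤ μ ω) {ω : Ω} (hω : 0 < μ ω) (f : Ω → α) :
    0 < probOf μ f (f ω) :=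
  hω.trans_le <| by
    simpa [probOf] using Finset.single_le_sum (f := fun ω' => if f ω' = f ω then μ ω' else 0)
      (fun ω' _ => ite_nonneg (h0 ω') le_rfl) (Finset.mem_univ ω)

lemma sum_probOf_mul [Fintype α] (f : Ω → α) (k : α → ℝ) :
    ∑ a, probOf μ f a * k a = ∑ ω, μ ω * k (f ω) := by
  simp only [probOf, Finset.sum_mul, ite_mul, zero_mul]
  rw [Finset.sum_comm]
  simp

lemma sum_probOf [Fintype α] (f : Ω → α) : ∑ a, probOf μ f a = ∑ ω, μ ω := by
  simpa using sum_probOf_mul (μ := μ) f fun _ => 1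

lemma sum_probOf_fst [Fintype α] (f : Ω → α) (g : Ω → β) (b : β) :
    ∑ a, probOf μ (fun ω => (f ω, g ω)) (a, b) = probOf μ g b := by
  unfold probOf
  rw [Finset.sum_comm]
  refine Finset.sum_congr rfl fun ω _ => ?_
  by_cases hg : g ω = b <;> simp [Prod.ext_iff, hg]

lemma probOf_comp_equiv {Ω' : Type*} [Fintype Ω'] (e : Ω ≃ Ω') (ν : Ω' → ℝ) (f : Ω' → α)
    (a : α) : probOf (fun ω => ν (e ω)) (fun ω => f (e ω)) a = probOf ν f a :=
  e.sum_comp fun ω' => if f ω' = a then ν ω' else 0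

section Product

variable {Ω₁ Ω₂ : Type*} [Fintype Ω₁] [Fintype Ω₂] {μ₁ : Ω₁ → ℝ} {μ₂ : Ω₂ → ℝ}

lemma probOf_prod_mk (U : Ω₁ → α) (V : Ω₂ → β) (a : α) (b : β) :
    probOf (fun x : Ω₁ × Ω₂ => μ₁ x.1 * μ₂ x.2) (fun x => (U x.1, V x.2)) (a, b) =
      probOf μ₁ U a * probOf μ₂ V b := by
  simp only [probOf, Fintype.sum_prod_type, Finset.sum_mul_sum, Prod.ext_iff]
  refine Finset.sum_congr rfl fun x₁ _ => Finset.sum_congr rfl fun x₂ _ => ?_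
  by_cases hU : U x₁ = a <;> by_cases hV : V x₂ = b <;> simp [hU, hV]

lemma probOf_prod_fst (h₂ : ∑ x, μ₂ x = 1) (U : Ω₁ → α) (a : α) :
    probOf (fun x : Ω₁ × Ω₂ => μ₁ x.1 * μ₂ x.2) (fun x => U x.1) a = probOf μ₁ U a := by
  simp only [probOf, Fintype.sum_prod_type]
  refine Finset.sum_congr rfl fun x₁ _ => ?_
  split_ifs <;> simp [← Finset.mul_sum, h₂]

lemma probOf_prod_snd (h₁ : ∑ x, μ₁ x = 1) (V : Ω₂ → β) (b : β) :
    probOf (fun x : Ω₁ × Ω₂ => μ₁ x.1 * μ₂ x.2) (fun x => V x.2) b = probOf μ₂ V b := by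
  simp only [probOf, Fintype.sum_prod_type]
  rw [Finset.sum_comm]
  refine Finset.sum_congr rfl fun x₂ _ => ?_
  split_ifs <;> simp [← Finset.sum_mul, h₁]

end Product

variable [Fintype α] [Fintype β] [Fintype γ] [Fintype δ]

lemma entropy_eq_neg_sum (f : Ω → α) :
    entropy μ f = -∑ ω, μ ω * Real.logb 2 (probOf μ f (f ω)) := by
  rw [entropy, sum_probOf_mul f fun a => Real.logb 2 (probOf μ f a)]

lemma entropy_congr {f : Ω → α} {g : Ω → β} (h : ∀ ω ω', f ω = f ω' ↔ g ω = g ω') :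
    entropy μ f = entropy μ g := by
  simp only [entropy_eq_neg_sum, probOf_congr fun ω' => h ω' _]

lemma condEntropy_congr {f : Ω → α} {g : Ω → β} {g' : Ω → γ}
    (hg : ∀ ω ω', g ω = g ω' ↔ g' ω = g' ω') : condEntropy μ f g = condEntropy μ f g' := by
  rw [condEntropy, condEntropy, entropy_congr hg,
    entropy_congr (f := fun ω => (f ω, g ω)) (g := fun ω => (f ω, g' ω))
      fun ω ω' => by simp only [Prod.ext_iff, hg ω ω']]

lemma condMI_eq_entropy (f : Ω → α) (g : Ω → β) (h : Ω → γ) :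
    condMI μ f g h =
      entropy μ (fun ω => (f ω, h ω)) + entropy μ (fun ω => (g ω, h ω))
        - entropy μ (fun ω => (f ω, g ω, h ω)) - entropy μ h := by
  have hassoc : entropy μ (fun ω => ((f ω, g ω), h ω)) = entropy μ (fun ω => (f ω, g ω, h ω)) :=
    entropy_congr fun ω ω' => by simp only [Prod.ext_iff, and_assoc]
  rw [condMI, condEntropy, condEntropy, condEntropy, hassoc]
  ring

lemma condMI_congr {α' β' γ' : Type*} [Fintype α'] [Fintype β'] [Fintype γ']
    {f : Ω → α} {g : Ω → β} {h : Ω → γ} {f' : Ω → α'} {g' : Ω → β'} {h' : Ω → γ'}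
    (hf : ∀ ω ω', f ω = f ω' ↔ f' ω = f' ω') (hg : ∀ ω ω', g ω = g ω' ↔ g' ω = g' ω')
    (hh : ∀ ω ω', h ω = h ω' ↔ h' ω = h' ω') :
    condMI μ f g h = condMI μ f' g' h' := by
  rw [condMI_eq_entropy, condMI_eq_entropy, entropy_congr hh,
    entropy_congr (f := fun ω => (f ω, h ω)) (g := fun ω => (f' ω, h' ω))
      fun ω ω' => by simp only [Prod.ext_iff, hf ω ω', hh ω ω'],
    entropy_congr (f := fun ω => (g ω, h ω)) (g := fun ω => (g' ω, h' ω))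
      fun ω ω' => by simp only [Prod.ext_iff, hg ω ω', hh ω ω'],
    entropy_congr (f := fun ω => (f ω, g ω, h ω)) (g := fun ω => (f' ω, g' ω, h' ω))
      fun ω ω' => by simp only [Prod.ext_iff, hf ω ω', hg ω ω', hh ω ω']]

lemma condMI_prod_comm (f : Ω → α) (g : Ω → β) (g' : Ω → γ) (h : Ω → δ) :
    condMI μ f (fun ω => (g ω, g' ω)) h = condMI μ f (fun ω => (g' ω, g ω)) h :=
  condMI_congr (fun _ _ => Iff.rfl) (fun ω ω' => by simp only [Prod.ext_iff, and_comm])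
    (fun _ _ => Iff.rfl)

lemma condMI_eq_condEntropy_sub (f : Ω → α) (g : Ω → β) (h : Ω → γ) :
    condMI μ f g h = condEntropy μ g h - condEntropy μ g (fun ω => (f ω, h ω)) := by
  have hperm : entropy μ (fun ω => (g ω, f ω, h ω)) = entropy μ (fun ω => (f ω, g ω, h ω)) :=
    entropy_congr fun ω ω' => by simp only [Prod.ext_iff]; tauto
  rw [condMI_eq_entropy, condEntropy, condEntropy, hperm]
  ring

lemma condMI_chain_rule (f : Ω → α) (g₁ : Ω → β) (g₂ : Ω → γ) (h : Ω → δ) :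
    condMI μ f (fun ω => (g₁ ω, g₂ ω)) h
      = condMI μ f g₁ h + condMI μ f g₂ (fun ω => (g₁ ω, h ω)) := by
  have e₁ : entropy μ (fun ω => (g₂ ω, g₁ ω, h ω)) = entropy μ (fun ω => ((g₁ ω, g₂ ω), h ω)) :=
    entropy_congr fun ω ω' => by simp only [Prod.ext_iff]; tauto
  have e₂ : entropy μ (fun ω => (f ω, g₂ ω, g₁ ω, h ω))
      = entropy μ (fun ω => (f ω, (g₁ ω, g₂ ω), h ω)) :=
    entropy_congr fun ω ω' => by simp only [Prod.ext_iff]; tauto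
  rw [condMI_eq_entropy, condMI_eq_entropy, condMI_eq_entropy, e₁, e₂]
  ring

lemma condMI_eq_zero_of_determined (f : Ω → α) (g : Ω → β) (h : Ω → γ)
    (hdet : ∀ ω ω', h ω = h ω' → g ω = g ω') : condMI μ f g h = 0 := by
  have e₁ : entropy μ (fun ω => (g ω, h ω)) = entropy μ h :=
    entropy_congr fun ω ω' => by
      simp only [Prod.ext_iff]
      exact ⟨And.right, fun hh => ⟨hdet _ _ hh, hh⟩⟩
  have e₂ : entropy μ (fun ω => (f ω, g ω, h ω)) = entropy μ (fun ω => (f ω, h ω)) :=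
    entropy_congr fun ω ω' => by
      simp only [Prod.ext_iff]
      exact ⟨fun hh => ⟨hh.1, hh.2.2⟩, fun hh => ⟨hh.1, hdet _ _ hh.2, hh.2⟩⟩
  rw [condMI_eq_entropy, e₁, e₂]
  ring

lemma sum_mul_logb_nonpos (h0 : ∀ ω, 0 ≤ μ ω) (h1 : ∑ ω, μ ω = 1) {k : Ω → ℝ}
    (hk : ∀ ω, 0 < μ ω → 0 < k ω) (hsum : ∑ ω, μ ω * k ω ≤ 1) :
    ∑ ω, μ ω * Real.logb 2 (k ω) ≤ 0 := by
  have hlog2 : 0 < Real.log 2 := Real.log_pos one_lt_two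
  have point : ∀ ω, μ ω * Real.logb 2 (k ω) ≤ (μ ω * k ω - μ ω) / Real.log 2 := by
    intro ω
    rcases (h0 ω).eq_or_lt with hz | hpos
    · simp [← hz]
    · rw [Real.logb, mul_div_assoc', div_le_div_iff_of_pos_right hlog2, ← mul_sub_one]
      exact mul_le_mul_of_nonneg_left (Real.log_le_sub_one_of_pos (hk ω hpos)) hpos.le
  calc ∑ ω, μ ω * Real.logb 2 (k ω)
      ≤ ∑ ω, (μ ω * k ω - μ ω) / Real.log 2 := Finset.sum_le_sum fun ω _ => point ω
    _ = (∑ ω, μ ω * k ω - 1) / Real.log 2 := by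
      rw [← Finset.sum_div, Finset.sum_sub_distrib, h1]
    _ ≤ 0 := div_nonpos_of_nonpos_of_nonneg (by linarith) hlog2.le

lemma condMI_eq_neg_sum_logb (h0 : ∀ ω, 0 ≤ μ ω) (f : Ω → α) (g : Ω → β) (h : Ω → γ) :
    condMI μ f g h = -∑ ω, μ ω * Real.logb 2
      (probOf μ (fun ω => (f ω, h ω)) (f ω, h ω) * probOf μ (fun ω => (g ω, h ω)) (g ω, h ω) /
        (probOf μ (fun ω => (f ω, g ω, h ω)) (f ω, g ω, h ω) * probOf μ h (h ω))) := by
  have point : ∀ ω, μ ω * Real.logb 2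
      (probOf μ (fun ω => (f ω, h ω)) (f ω, h ω) * probOf μ (fun ω => (g ω, h ω)) (g ω, h ω) /
        (probOf μ (fun ω => (f ω, g ω, h ω)) (f ω, g ω, h ω) * probOf μ h (h ω))) =
      μ ω * Real.logb 2 (probOf μ (fun ω => (f ω, h ω)) (f ω, h ω))
        + μ ω * Real.logb 2 (probOf μ (fun ω => (g ω, h ω)) (g ω, h ω))
        - μ ω * Real.logb 2 (probOf μ (fun ω => (f ω, g ω, h ω)) (f ω, g ω, h ω))
        - μ ω * Real.logb 2 (probOf μ h (h ω)) := by
    intro ω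
    rcases (h0 ω).eq_or_lt with hz | hpos
    · simp [← hz]
    · have hfh := probOf_self_pos h0 hpos fun ω => (f ω, h ω)
      have hgh := probOf_self_pos h0 hpos fun ω => (g ω, h ω)
      have hfgh := probOf_self_pos h0 hpos fun ω => (f ω, g ω, h ω)
      have hh := probOf_self_pos h0 hpos h
      rw [Real.logb_div (by positivity) (by positivity), Real.logb_mul hfh.ne' hgh.ne',
        Real.logb_mul hfgh.ne' hh.ne']
      ring
  simp only [point, Finset.sum_sub_distrib, Finset.sum_add_distrib, condMI_eq_entropy,
    entropy_eq_neg_sum]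
  ring

lemma sum_probOf_mul_probOf_div_le (f : Ω → α) (g : Ω → β) (h : Ω → γ) :
    ∑ v : α × β × γ, probOf μ (fun ω => (f ω, h ω)) (v.1, v.2.2) *
      probOf μ (fun ω => (g ω, h ω)) v.2 / probOf μ h v.2.2 ≤ ∑ ω, μ ω := by
  set s := probOf μ (fun ω => (f ω, h ω))
  set t := probOf μ (fun ω => (g ω, h ω))
  set r := probOf μ h
  have hmarg : ∑ v : α × β × γ, s (v.1, v.2.2) * t v.2 / r v.2.2 = ∑ c, r c * r c / r c := by
    simp only [Fintype.sum_prod_type]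
    calc ∑ a, ∑ b, ∑ c, s (a, c) * t (b, c) / r c
        = ∑ a, ∑ c, ∑ b, s (a, c) * t (b, c) / r c :=
          Finset.sum_congr rfl fun _ _ => Finset.sum_comm
      _ = ∑ c, ∑ a, ∑ b, s (a, c) * t (b, c) / r c := Finset.sum_comm
      _ = ∑ c, r c * r c / r c := Finset.sum_congr rfl fun c _ => by
          simp_rw [← Finset.sum_div, ← Finset.mul_sum, ← Finset.sum_mul]
          rw [sum_probOf_fst f h c, sum_probOf_fst g h c]
  rw [hmarg, ← sum_probOf h]
  refine Finset.sum_le_sum fun c _ => show r c * r c / r c ≤ r c from ?_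
  rcases eq_or_ne (r c) 0 with hrc | hrc
  · simp [hrc]
  · rw [mul_div_assoc, div_self hrc, mul_one]

lemma condMI_nonneg (hμ : IsPMF μ) (f : Ω → α) (g : Ω → β) (h : Ω → γ) :
    0 ≤ condMI μ f g h := by
  obtain ⟨h0, h1⟩ := hμ
  set P := probOf μ (fun ω => (f ω, g ω, h ω))
  set s := probOf μ (fun ω => (f ω, h ω))
  set t := probOf μ (fun ω => (g ω, h ω))
  set r := probOf μ h
  set k : α × β × γ → ℝ := fun v => s (v.1, v.2.2) * t v.2 / (P v * r v.2.2)
  have hPk : ∀ v, P v * k v ≤ s (v.1, v.2.2) * t v.2 / r v.2.2 := by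
    intro v
    have := probOf_nonneg h0 (fun ω => (f ω, h ω)) (v.1, v.2.2)
    have := probOf_nonneg h0 (fun ω => (g ω, h ω)) v.2
    have := probOf_nonneg h0 h v.2.2
    rcases eq_or_ne (P v) 0 with hPv | hPv
    · rw [hPv, zero_mul]; positivity
    · rw [mul_div_assoc', mul_comm (P v), mul_comm (P v), mul_div_mul_right _ _ hPv]
  have hsum : ∑ ω, μ ω * k (f ω, g ω, h ω) ≤ 1 := calc
    ∑ ω, μ ω * k (f ω, g ω, h ω) = ∑ v, P v * k v := (sum_probOf_mul _ k).symm
    _ ≤ ∑ v : α × β × γ, s (v.1, v.2.2) * t v.2 / r v.2.2 := Finset.sum_le_sum fun v _ => hPk v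
    _ ≤ 1 := (sum_probOf_mul_probOf_div_le f g h).trans_eq h1
  rw [condMI_eq_neg_sum_logb h0, neg_nonneg]
  refine sum_mul_logb_nonpos h0 h1 (fun ω hω => ?_) hsum
  have := probOf_self_pos h0 hω fun ω => (f ω, g ω, h ω)
  have := probOf_self_pos h0 hω fun ω => (f ω, h ω)
  have := probOf_self_pos h0 hω fun ω => (g ω, h ω)
  have := probOf_self_pos h0 hω h
  positivity

lemma condMI_eq_zero_of_markovChain (h0 : ∀ ω, 0 ≤ μ ω) {f : Ω → α} {g : Ω → β} {h : Ω → γ}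
    (hm : MarkovChain μ f h g) : condMI μ f g h = 0 := by
  rw [condMI_eq_neg_sum_logb h0, neg_eq_zero]
  refine Finset.sum_eq_zero fun ω _ => ?_
  rcases (h0 ω).eq_or_lt with hz | hpos
  · simp [← hz]
  have hfac := hm (f ω) (h ω) (g ω)
  rw [probOf_congr (g := fun ω => (f ω, g ω, h ω)) (b := (f ω, g ω, h ω))
      fun _ => by simp only [Prod.ext_iff]; tauto,
    probOf_congr (f := fun ω => (h ω, g ω)) (g := fun ω => (g ω, h ω)) (b := (g ω, h ω))
      fun _ => by simp only [Prod.ext_iff]; tauto] at hfac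
  have hfgh := probOf_self_pos h0 hpos fun ω => (f ω, g ω, h ω)
  have hh := probOf_self_pos h0 hpos h
  rw [← hfac, div_self (by positivity), Real.logb_one, mul_zero]

lemma condMI_le_condMI_prod (hμ : IsPMF μ) (f : Ω → α) (g : Ω → β) (g' : Ω → γ) (h : Ω → δ) :
    condMI μ f g h ≤ condMI μ f (fun ω => (g' ω, g ω)) h := by
  rw [condMI_prod_comm, condMI_chain_rule]
  linarith [condMI_nonneg hμ f g' fun ω => (g ω, h ω)]

lemma condMI_eq_zero_extend_cond (hμ : IsPMF μ) {f : Ω → α} {g : Ω → β} {h : Ω → γ}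
    (hfg : condMI μ f g h = 0) {k : Ω → δ} (hk : ∀ ω ω', g ω = g ω' → h ω = h ω' → k ω = k ω') :
    condMI μ f g (fun ω => (k ω, h ω)) = 0 := by
  have hchain := condMI_chain_rule (μ := μ) f k g h
  rw [condMI_prod_comm, condMI_chain_rule, hfg,
    condMI_eq_zero_of_determined f k (fun ω => (g ω, h ω))
      fun ω ω' hgh => hk ω ω' (congrArg Prod.fst hgh) (congrArg Prod.snd hgh)] at hchain
  linarith [condMI_nonneg hμ f k h, condMI_nonneg hμ f g fun ω => (k ω, h ω)]

lemma condEntropy_nonneg (h0 : ∀ ω, 0 ≤ μ ω) (f : Ω → α) (g : Ω → β) :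
    0 ≤ condEntropy μ f g := by
  rw [condEntropy, entropy_eq_neg_sum, entropy_eq_neg_sum, neg_sub_neg, sub_nonneg]
  refine Finset.sum_le_sum fun ω _ => ?_
  rcases (h0 ω).eq_or_lt with hz | hpos
  · simp [← hz]
  refine mul_le_mul_of_nonneg_left ?_ hpos.le
  exact Real.logb_le_logb_of_le one_lt_two (probOf_self_pos h0 hpos _)
    (probOf_mono h0 fun _ hfg => congrArg Prod.snd hfg)

lemma entropy_const (hμ : IsPMF μ) (c : α) : entropy μ (fun _ : Ω => c) = 0 := by
  simp [entropy, probOf, apply_ite, hμ.2]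

lemma condEntropy_le_entropy (hμ : IsPMF μ) (f : Ω → α) (g : Ω → β) :
    condEntropy μ f g ≤ entropy μ f := by
  have hmi := condMI_nonneg hμ f g fun _ => ()
  rw [condMI_eq_entropy, entropy_const hμ (),
    entropy_congr (f := fun ω => (f ω, ())) (g := f) (by simp [Prod.ext_iff]),
    entropy_congr (f := fun ω => (g ω, ())) (g := g) (by simp [Prod.ext_iff]),
    entropy_congr (f := fun ω => (f ω, g ω, ())) (g := fun ω => (f ω, g ω))
      (by simp [Prod.ext_iff])] at hmi
  rw [condEntropy]
  linarith

lemma entropy_le_logb_card (hμ : IsPMF μ) (f : Ω → α) :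
    entropy μ f ≤ Real.logb 2 (Fintype.card α) := by
  cases isEmpty_or_nonempty α
  · simp [entropy]
  have hN : (0 : ℝ) < Fintype.card α := by exact_mod_cast Fintype.card_pos
  set N : ℝ := (Fintype.card α : ℝ)
  set q := probOf μ f
  have hgap : ∑ ω, μ ω * Real.logb 2 (q (f ω) * N)⁻¹ = entropy μ f - Real.logb 2 N := by
    rw [entropy_eq_neg_sum, ← one_mul (Real.logb 2 N), ← hμ.2, Finset.sum_mul,
      ← Finset.sum_neg_distrib, ← Finset.sum_sub_distrib]
    refine Finset.sum_congr rfl fun ω _ => ?_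
    rcases (hμ.1 ω).eq_or_lt with hz | hpos
    · simp [← hz]
    rw [Real.logb_inv, Real.logb_mul (probOf_self_pos hμ.1 hpos f).ne' hN.ne']
    ring
  have hsum : ∑ ω, μ ω * (q (f ω) * N)⁻¹ ≤ 1 := calc
    ∑ ω, μ ω * (q (f ω) * N)⁻¹ = ∑ a, q a * (q a * N)⁻¹ :=
      (sum_probOf_mul f fun a => (q a * N)⁻¹).symm
    _ ≤ ∑ _a : α, N⁻¹ := Finset.sum_le_sum fun a _ => by
      rw [mul_inv, ← mul_assoc]
      exact mul_le_of_le_one_left (by positivity) (mul_inv_le_one)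
    _ = 1 := by simp [N, hN.ne']
  linarith [sum_mul_logb_nonpos hμ.1 hμ.2
    (fun ω hω => by have := probOf_self_pos hμ.1 hω f; positivity) hsum]

end General

section IID

variable {W : Type*} [Fintype W] {p : W → ℝ} {n : ℕ}

lemma sum_prod_eq_one {ι : Type*} [Fintype ι] [DecidableEq ι] (hp : IsPMF p) :
    ∑ w : ι → W, ∏ j, p (w j) = 1 := by
  rw [← Fintype.piFinset_univ, ← Finset.prod_univ_sum]
  simp [hp.2]

lemma isPMF_iid (hp : IsPMF p) (n : ℕ) : IsPMF (iid p n) :=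
  ⟨fun _ => Finset.prod_nonneg fun _ _ => hp.1 _, sum_prod_eq_one hp⟩

lemma probOf_iid_restrict {α β : Type*} (hp : IsPMF p) (q : Fin n → Prop) [DecidablePred q]
    (U : ({j // q j} → W) → α) (V : ({j // ¬ q j} → W) → β) (a : α) (b : β) :
    probOf (iid p n) (fun w => (U (Subtype.restrict q w), V (Subtype.restrict (¬ q ·) w))) (a, b)
      = probOf (iid p n) (fun w => U (Subtype.restrict q w)) a *
        probOf (iid p n) (fun w => V (Subtype.restrict (¬ q ·) w)) b := by
  let e := Equiv.piEquivPiSubtypeProd q fun _ => W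
  let μ₁ : ({j // q j} → W) → ℝ := fun x => ∏ j, p (x j)
  let μ₂ : ({j // ¬ q j} → W) → ℝ := fun x => ∏ j, p (x j)
  let ν : (({j // q j} → W) × ({j // ¬ q j} → W)) → ℝ := fun x => μ₁ x.1 * μ₂ x.2
  have hiid : iid p n = fun w => ν (e w) :=
    funext fun w => (Fintype.prod_subtype_mul_prod_subtype q fun j => p (w j)).symm
  rw [hiid]
  calc _ = probOf ν (fun x => (U x.1, V x.2)) (a, b) := probOf_comp_equiv e ν _ _
    _ = probOf ν (fun x => U x.1) a * probOf ν (fun x => V x.2) b :=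
      (probOf_prod_mk U V a b).trans (congrArg₂ (· * ·)
        (probOf_prod_fst (sum_prod_eq_one hp) U a).symm
        (probOf_prod_snd (sum_prod_eq_one hp) V b).symm)
    _ = _ := congrArg₂ (· * ·) (probOf_comp_equiv e ν (fun x => U x.1) a).symm
      (probOf_comp_equiv e ν (fun x => V x.2) b).symm

lemma markovChain_iid_restrict {α β γ δ : Type*} (hp : IsPMF p) (q : Fin n → Prop)
    [DecidablePred q] (A : ({j // ¬ q j} → W) → α) (B₁ : ({j // ¬ q j} → W) → β)
    (B₂ : ({j // q j} → W) → γ) (C : ({j // q j} → W) → δ) :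
    MarkovChain (iid p n) (fun w => A (Subtype.restrict (¬ q ·) w))
      (fun w => (B₁ (Subtype.restrict (¬ q ·) w), B₂ (Subtype.restrict q w)))
      (fun w => C (Subtype.restrict q w)) := by
  rintro a ⟨b₁, b₂⟩ c
  have hABC : probOf (iid p n) (fun w => (A (Subtype.restrict (¬ q ·) w),
      (B₁ (Subtype.restrict (¬ q ·) w), B₂ (Subtype.restrict q w)), C (Subtype.restrict q w)))
      (a, (b₁, b₂), c) = _ := (probOf_congr fun w => by simp only [Prod.ext_iff]; tauto).trans
    (probOf_iid_restrict hp q (fun x => (B₂ x, C x)) (fun y => (A y, B₁ y)) (b₂, c) (a, b₁))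
  have hB : probOf (iid p n)
      (fun w => (B₁ (Subtype.restrict (¬ q ·) w), B₂ (Subtype.restrict q w))) (b₁, b₂) = _ :=
    (probOf_congr fun w => by simp only [Prod.ext_iff]; tauto).trans
      (probOf_iid_restrict hp q B₂ B₁ b₂ b₁)
  have hAB : probOf (iid p n) (fun w => (A (Subtype.restrict (¬ q ·) w),
      (B₁ (Subtype.restrict (¬ q ·) w), B₂ (Subtype.restrict q w)))) (a, (b₁, b₂)) = _ :=
    (probOf_congr fun w => by simp only [Prod.ext_iff]; tauto).trans
      (probOf_iid_restrict hp q B₂ (fun y => (A y, B₁ y)) b₂ (a, b₁))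
  have hBC : probOf (iid p n) (fun w => ((B₁ (Subtype.restrict (¬ q ·) w),
      B₂ (Subtype.restrict q w)), C (Subtype.restrict q w))) ((b₁, b₂), c) = _ :=
    (probOf_congr fun w => by simp only [Prod.ext_iff]; tauto).trans
      (probOf_iid_restrict hp q (fun x => (B₂ x, C x)) B₁ (b₂, c) b₁)
  beta_reduce
  rw [hABC, hB, hAB, hBC]
  ring

end IID

section Sequences

variable {α : Type*} {n : ℕ} {x x' : Fin n → α}

lemma eq_of_past_fut (i : Fin n) (hpast : past i x = past i x') (hi : x i = x' i)
    (hfut : fut i x = fut i x') : x = x' := by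
  funext j
  rcases lt_trichotomy j i with hj | rfl | hj
  · exact congrFun hpast ⟨j, hj⟩
  · exact hi
  · exact congrFun hfut ⟨j, hj⟩

lemma fut_eq_iff (i : Fin n) :
    fut i x = fut i x' ↔ (fun j : {j : Fin n // (i : ℕ) + 1 ≤ j} => x j.1) = fun j => x' j.1 := by
  simp only [fut, funext_iff, Subtype.forall, Fin.lt_def, Nat.succ_le_iff]

lemma tail_eq_iff (i : Fin n) :
    (fun j : {j : Fin n // (i : ℕ) ≤ j} => x j.1) = (fun j => x' j.1) ↔
      x i = x' i ∧ fut i x = fut i x' := by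
  simp only [fut, funext_iff, Subtype.forall, Fin.lt_def, Fin.forall_iff]
  refine ⟨fun h => ⟨h i i.2 le_rfl, fun j hj hij => h j hj hij.le⟩, fun ⟨hi, h⟩ j hj hij => ?_⟩
  rcases hij.eq_or_lt with hji | hji
  · obtain rfl : i = ⟨j, hj⟩ := Fin.ext hji
    exact hi
  · exact h j hj hji

end Sequences

section SingleLetterization

variable {𝒳 𝒴 𝒵 α β : Type*} [Fintype 𝒳] [Fintype 𝒴] [Fintype 𝒵] [Fintype α] [Fintype β]
  {p : 𝒳 × 𝒴 × 𝒵 → ℝ} {n : ℕ}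

/-- The auxiliary variable `U_{1,i} = (M_AR, X^{i-1}, Y_{i+1}^n)` with `M_AR = A(Xⁿ)`. -/
def auxU (A : (Fin n → 𝒳) → α) (i : Fin n) (w : Fin n → 𝒳 × 𝒴 × 𝒵) :
    α × ({j : Fin n // j < i} → 𝒳) × ({j : Fin n // i < j} → 𝒴) :=
  (A fun j => (w j).1, past i fun j => (w j).1, fut i fun j => (w j).2.1)

/-- `H(M | Xⁿ, (Y_j)_{j ≥ k})`, with positions `j` counted from `0`. -/
def condEntropyYTail (p : 𝒳 × 𝒴 × 𝒵 → ℝ) (M : (Fin n → 𝒳 × 𝒴 × 𝒵) → β) (k : ℕ) : ℝ :=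
  condEntropy (iid p n) M
    (fun w => (fun j => (w j).1, fun j : {j : Fin n // k ≤ (j : ℕ)} => (w j.1).2.1))

lemma condMI_letter_fut_eq_zero (hp : IsPMF p) (A : (Fin n → 𝒳) → α) (i : Fin n) :
    condMI (iid p n) (fun w => (w i).2.1) (fun w => fut i fun j => (w j).1)
      (fun w => ((w i).1, auxU A i w)) = 0 := by
  have hμ := isPMF_iid hp n
  -- `Y_i`, `X_i`, `X^{i-1}` see only the letters up to `i`; `Y_{i+1}^n`, `X_{i+1}^n` only the rest.
  have hmarkov : condMI (iid p n) (fun w => (w i).2.1) (fun w => fut i fun j => (w j).1)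
      (fun w => (((w i).1, past i fun j => (w j).1), fut i fun j => (w j).2.1)) = 0 :=
    condMI_eq_zero_of_markovChain hμ.1 <| markovChain_iid_restrict hp (i < ·)
      (fun y => (y ⟨i, lt_irrefl i⟩).2.1)
      (fun y => ((y ⟨i, lt_irrefl i⟩).1, fun j : {j // j < i} => (y ⟨j, j.2.asymm⟩).1))
      (fun x j => (x j).2.1) (fun x j => (x j).1)
  rw [← condMI_eq_zero_extend_cond hμ hmarkov (k := fun w => A fun j => (w j).1)
    fun ω ω' hfut hrest => congrArg A <| eq_of_past_fut i (congrArg (·.1.2) hrest)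
      (congrArg (·.1.1) hrest) hfut]
  exact condMI_congr (fun _ _ => Iff.rfl) (fun _ _ => Iff.rfl)
    fun ω ω' => by simp only [auxU, Prod.ext_iff]; tauto

lemma condMI_letter_eq_condEntropyYTail_sub (A : (Fin n → 𝒳) → α)
    (M : (Fin n → 𝒳 × 𝒴 × 𝒵) → β) (i : Fin n) :
    condMI (iid p n) (fun w => (w i).2.1) M
        (fun w => (fut i (fun j => (w j).1), (w i).1, auxU A i w))
      = condEntropyYTail p M (i + 1) - condEntropyYTail p M i := by
  rw [condMI_eq_condEntropy_sub, condEntropyYTail, condEntropyYTail]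
  congr 1 <;> refine condEntropy_congr fun ω ω' => ?_ <;> simp only [auxU, Prod.ext_iff]
  · constructor
    · rintro ⟨hfut, hi, -, hpast, hY⟩
      exact ⟨eq_of_past_fut i hpast hi hfut, (fut_eq_iff i).1 hY⟩
    · rintro ⟨hX, hY⟩
      exact ⟨congrArg (fut i) hX, congrFun hX i, congrArg A hX, congrArg (past i) hX,
        (fut_eq_iff i).2 hY⟩
  · constructor
    · rintro ⟨hYi, hfut, hi, -, hpast, hY⟩
      exact ⟨eq_of_past_fut i hpast hi hfut, (tail_eq_iff i).2 ⟨hYi, hY⟩⟩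
    · rintro ⟨hX, hY⟩
      obtain ⟨hYi, hYfut⟩ :=
        (tail_eq_iff (x := fun j => (ω j).2.1) (x' := fun j => (ω' j).2.1) i).1 hY
      exact ⟨hYi, congrArg (fut i) hX, congrFun hX i, congrArg A hX, congrArg (past i) hX,
        hYfut⟩

lemma condMI_letter_le_condEntropyYTail_sub (hp : IsPMF p) (A : (Fin n → 𝒳) → α)
    (M : (Fin n → 𝒳 × 𝒴 × 𝒵) → β) (i : Fin n) :
    condMI (iid p n) (fun w => (w i).2.1) M (fun w => ((w i).1, auxU A i w))
      ≤ condEntropyYTail p M (i + 1) - condEntropyYTail p M i := calc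
  _ ≤ condMI (iid p n) (fun w => (w i).2.1) (fun w => (fut i (fun j => (w j).1), M w))
        (fun w => ((w i).1, auxU A i w)) := condMI_le_condMI_prod (isPMF_iid hp n) _ _ _ _
  _ = _ := by
    rw [condMI_chain_rule, condMI_letter_fut_eq_zero hp, zero_add,
      condMI_letter_eq_condEntropyYTail_sub]

lemma sum_condMI_letter_le_condEntropy (hp : IsPMF p) (A : (Fin n → 𝒳) → α)
    (M : (Fin n → 𝒳 × 𝒴 × 𝒵) → β) :
    ∑ i : Fin n, condMI (iid p n) (fun w => (w i).2.1) M (fun w => ((w i).1, auxU A i w))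
      ≤ condEntropy (iid p n) M (fun w => (A fun j => (w j).1, fun j => (w j).1)) := by
  set F := condEntropyYTail p M
  have htelescope : ∑ i : Fin n, (F (i + 1) - F i) = F n - F 0 := by
    rw [Fin.sum_univ_eq_sum_range (fun k => F (k + 1) - F k), Finset.sum_range_sub]
  have hFn : F n = condEntropy (iid p n) M (fun w => (A fun j => (w j).1, fun j => (w j).1)) :=
    condEntropy_congr fun ω ω' => by
      simp only [Prod.ext_iff]
      exact ⟨fun h => ⟨congrArg A h.1, h.1⟩,
        fun h => ⟨h.2, funext fun j => absurd j.2 (not_le.2 j.1.isLt)⟩⟩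
  calc _ ≤ ∑ i : Fin n, (F (i + 1) - F i) :=
        Finset.sum_le_sum fun i _ => condMI_letter_le_condEntropyYTail_sub hp A M i
    _ = F n - F 0 := htelescope
    _ ≤ F n := sub_le_self _ (condEntropy_nonneg (isPMF_iid hp n).1 _ _)
    _ = _ := hFn

end SingleLetterization

/-- **Single-letterization of the delivery-stage rate (converse step for `R_RA`).**
With `M_AR = φ_AR(X^n)`, `M_BR = φ_BR(Y^n)`, `M_RA = φ_RA(Z^n, M_AR, M_BR)`,
`U_{1,i} = (M_AR, X^{i-1}, Y_{i+1}^n)` and `V_{2,i} = M_RA`,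
`∑ᵢ I(Y_i; M_RA | X_i, U_{1,i}) ≤ H(M_RA | M_AR, X^n) ≤ log₂|ℳ_RA|`;
in particular if `|ℳ_RA| ≤ 2^{n R_RA}` then `∑ᵢ I(Y_i; V_{2,i} | X_i, U_{1,i}) ≤ n R_RA`. -/
theorem dsc_rate_single_letterization_RA
    {𝒳 𝒴 𝒵 : Type*} [Fintype 𝒳] [Fintype 𝒴] [Fintype 𝒵]
    (p : 𝒳 × 𝒴 × 𝒵 → ℝ) (hp : IsPMF p) (n : ℕ)
    (MAR MBR MRA : FinAlph)
    (φAR : (Fin n → 𝒳) → MAR.carrier)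
    (φBR : (Fin n → 𝒴) → MBR.carrier)
    (φRA : (Fin n → 𝒵) → MAR.carrier → MBR.carrier → MRA.carrier) :
    -- ∑ᵢ I(Y_i; M_RA | X_i, U_{1,i}) ≤ H(M_RA | M_AR, X^n)
    (∑ i : Fin n, condMI (iid p n)
        (fun w => (w i).2.1)
        (fun w => φRA (fun j => (w j).2.2) (φAR fun j => (w j).1) (φBR fun j => (w j).2.1))
        (fun w => ((w i).1,
          (φAR fun j => (w j).1, past i fun j => (w j).1, fut i fun j => (w j).2.1)))
      ≤ condEntropy (iid p n)
          (fun w => φRA (fun j => (w j).2.2) (φAR fun j => (w j).1) (φBR fun j => (w j).2.1))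
          (fun w => (φAR fun j => (w j).1, fun j => (w j).1))) ∧
    -- H(M_RA | M_AR, X^n) ≤ log₂ |ℳ_RA|
    (condEntropy (iid p n)
        (fun w => φRA (fun j => (w j).2.2) (φAR fun j => (w j).1) (φBR fun j => (w j).2.1))
        (fun w => (φAR fun j => (w j).1, fun j => (w j).1))
      ≤ Real.logb 2 (Fintype.card MRA.carrier)) ∧
    -- in particular, if |ℳ_RA| ≤ 2^{n R_RA} then ∑ᵢ I(Y_i; V_{2,i} | X_i, U_{1,i}) ≤ n R_RA
    (∀ RRA : ℝ, (Fintype.card MRA.carrier : ℝ) ≤ (2 : ℝ) ^ ((n : ℝ) * RRA) →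
      ∑ i : Fin n, condMI (iid p n)
        (fun w => (w i).2.1)
        (fun w => φRA (fun j => (w j).2.2) (φAR fun j => (w j).1) (φBR fun j => (w j).2.1))
        (fun w => ((w i).1,
          (φAR fun j => (w j).1, past i fun j => (w j).1, fut i fun j => (w j).2.1)))
        ≤ (n : ℝ) * RRA) := by
  have hμ := isPMF_iid hp n
  set M : (Fin n → 𝒳 × 𝒴 × 𝒵) → MRA.carrier :=
    fun w => φRA (fun j => (w j).2.2) (φAR fun j => (w j).1) (φBR fun j => (w j).2.1)
  have hsum := sum_condMI_letter_le_condEntropy hp φAR M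
  have hcond :=
    (condEntropy_le_entropy hμ M fun w => (φAR fun j => (w j).1, fun j => (w j).1)).trans
      (entropy_le_logb_card hμ M)
  refine ⟨hsum, hcond, fun RRA hcard => hsum.trans (hcond.trans ?_)⟩
  obtain ⟨w⟩ := hμ.nonempty
  have hpos : (0 : ℝ) < Fintype.card MRA.carrier := by
    exact_mod_cast Fintype.card_pos_iff.2 ⟨M w⟩
  calc Real.logb 2 (Fintype.card MRA.carrier) ≤ Real.logb 2 (2 ^ ((n : ℝ) * RRA)) :=
        Real.logb_le_logb_of_le one_lt_two hpos hcard
    _ = n * RRA := Real.logb_rpow two_pos (by norm_num)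

end IRSC
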